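/- The two MatchKAT encodings of a priority-ordered match-action table are semantically equivalent at the level of matched rules: for tests b₁,…,b_k and actions p₁,…,p_k, the term b₁p₁ + b̄₁b₂p₂ + … + b̄₁⋯b̄_{k−1}b_kp_k applied to a singleton {π} equals ⟦p_r⟧({π}) where r is the least index with π ∈ ⟦b_r⟧ (and equals ∅ if no rule matches). -/

import Mathlib

/-- Packets: binary strings of length `n`. -/
abbrev Pk (n : ℕ) := List.Vector Bool n

/-- The `p`-th bit of a packet. -/
def getBit {n : ℕ} (π : Pk n) (p : ℕ) : Bool := π.toList.getD p false

/-- The packet `π[p ← k]`. -/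
def setBit {n : ℕ} (π : Pk n) (p : ℕ) (k : Bool) : Pk n :=
  ⟨π.1.set p k, by rw [List.length_set]; exact π.2⟩

/-- MatchKAT terms of packet size `n`, with abstract tests: `testSet B`
is a test whose semantics is `⟦b⟧(P) = P ∩ B`; a negated test `b̄` is
`testSet Bᶜ`, since `P ∩ Bᶜ = P − B`. -/
inductive MK (n : ℕ) : Type
  | bot : MK n
  | top : MK n
  | testSet (B : Set (Pk n)) : MK n
  | assign (p : ℕ) (k : Bool) : MK n
  | plus (a b : MK n) : MK n
  | seq (a b : MK n) : MK n
  | star (a : MK n) : MK n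

/-- Packet filtering semantics of MatchKAT. -/
def mksem {n : ℕ} : MK n → Set (Pk n) → Set (Pk n)
  | .bot, _ => ∅
  | .top, P => P
  | .testSet B, P => P ∩ B
  | .assign p k, P => (fun π => setBit π p k) '' P
  | .plus a b, P => mksem a P ∪ mksem b P
  | .seq a b, P => mksem b (mksem a P)
  | .star a, P => ⋃ m : ℕ, (mksem a)^[m] P

/-- The encoding `b̄₁ ⋯ b̄_{r-1} b_r p_r` of rule `r`: all higher-priority
tests negated, then the test of rule `r`, then its action. -/
def ruleTerm {n : ℕ} (k : ℕ) (B : Fin k → Set (Pk n)) (p : Fin k → MK n)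
    (r : Fin k) : MK n :=
  ((List.finRange k).filter (fun r' => r' < r)).foldr
    (fun r' acc => .seq (.testSet (B r')ᶜ) acc)
    (.seq (.testSet (B r)) (p r))

/-- The priority-table encoding `b₁p₁ + b̄₁b₂p₂ + … + b̄₁⋯b̄_{k−1}b_kp_k`. -/
def table {n : ℕ} (k : ℕ) (B : Fin k → Set (Pk n)) (p : Fin k → MK n) : MK n :=
  (List.finRange k).foldr (fun r acc => .plus (ruleTerm k B p r) acc) .bot

/-!
On a single packet `π` every test either keeps `{π}` or kills it, and `∅` stays `∅` under any
term. Hence the `r`-th summand of the table sends `{π}` to `⟦p_r⟧({π})` if `r` is the first rule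
matching `π` and to `∅` otherwise, and the table is the union of its summands.
-/

lemma mksem_empty {n : ℕ} (a : MK n) : mksem a ∅ = ∅ := by
  induction a with
  | bot | top => rfl
  | testSet B => exact Set.empty_inter B
  | assign p k => exact Set.image_empty _
  | plus a b ha hb => simp only [mksem, ha, hb, Set.union_empty]
  | seq a b ha hb => simp only [mksem, ha, hb]
  | star a ha =>
    have hiter : ∀ m, (mksem a)^[m] ∅ = ∅ := fun m => Function.iterate_fixed ha m
    simp only [mksem, hiter, Set.iUnion_empty]

open Classical in
lemma mksem_testSet_singleton {n : ℕ} (B : Set (Pk n)) (π : Pk n) :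
    mksem (.testSet B) {π} = if π ∈ B then {π} else ∅ := by
  split_ifs with h
  · exact Set.singleton_inter_of_mem h
  · exact Set.singleton_inter_of_notMem h

open Classical in
lemma mksem_foldr_seq_testSet_compl_singleton {n : ℕ} {ι : Type*} (B : ι → Set (Pk n))
    (t : MK n) (π : Pk n) (L : List ι) :
    mksem (L.foldr (fun i acc => .seq (.testSet (B i)ᶜ) acc) t) {π}
      = if ∀ i ∈ L, π ∉ B i then mksem t {π} else ∅ := by
  induction L with
  | nil => simp
  | cons i L ih =>
    change mksem (L.foldr _ t) (mksem (.testSet (B i)ᶜ) {π}) = _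
    by_cases h : π ∈ B i
    · simp [mksem_testSet_singleton, h, mksem_empty]
    · simp [mksem_testSet_singleton, h, ih]

open Classical in
lemma mksem_ruleTerm_singleton {n k : ℕ} (B : Fin k → Set (Pk n)) (p : Fin k → MK n)
    (π : Pk n) (r : Fin k) :
    mksem (ruleTerm k B p r) {π}
      = if π ∈ B r ∧ ∀ r' < r, π ∉ B r' then mksem (p r) {π} else ∅ := by
  rw [ruleTerm, mksem_foldr_seq_testSet_compl_singleton]
  by_cases hr : π ∈ B r
  · simp [mksem, hr]
  · simp [mksem, hr, mksem_empty]

lemma mksem_foldr_plus {n : ℕ} {ι : Type*} (a : ι → MK n) (P : Set (Pk n)) (L : List ι) :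
    mksem (L.foldr (fun i acc => .plus (a i) acc) .bot) P = ⋃ i ∈ L, mksem (a i) P := by
  induction L with
  | nil => simp [mksem]
  | cons i L ih =>
    change mksem (a i) P ∪ _ = _
    ext x
    simp [ih]

lemma mksem_table {n k : ℕ} (B : Fin k → Set (Pk n)) (p : Fin k → MK n) (P : Set (Pk n)) :
    mksem (table k B p) P = ⋃ r, mksem (ruleTerm k B p r) P := by
  simp [table, mksem_foldr_plus]

/-- On a singleton input `{π}`, the priority-table encoding behaves exactly as
the action of the highest-priority (least-index) matching rule, and drops the
packet when no rule matches. -/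
theorem table_correct {n k : ℕ} (B : Fin k → Set (Pk n)) (p : Fin k → MK n)
    (π : Pk n) :
    (∀ r : Fin k, π ∈ B r → (∀ r' : Fin k, r' < r → π ∉ B r') →
        mksem (table k B p) {π} = mksem (p r) {π}) ∧
    ((∀ r : Fin k, π ∉ B r) → mksem (table k B p) {π} = ∅) := by
  classical
  simp only [mksem_table, mksem_ruleTerm_singleton]
  refine ⟨fun r hr hmin => ?_, fun hno => by simp [hno]⟩
  have hfirst : ∀ r', (π ∈ B r' ∧ ∀ r'' < r', π ∉ B r'') ↔ r' = r := by
    refine fun r' => ⟨fun ⟨hr', hmin'⟩ => ?_, fun h => h ▸ ⟨hr, hmin⟩⟩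
    rcases lt_trichotomy r' r with h | h | h
    · exact absurd hr' (hmin r' h)
    · exact h
    · exact absurd hr (hmin' r h)
  ext x
  simp [hfirst]
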